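/- There exists a countable class H = {h_i}_{i∈ℕ} ⊆ {0,1}^ℕ of computable hypotheses with Ldim(H) = 1 such that for every partial computable two-place function A that is total with values in {0,1} on all (encoded H-realizable sample, point) pairs, and for every M ∈ ℕ, there is an H-realizable sample on which A makes more than M mistakes. That is, H has finite Littlestone dimension but is not computably online learnable with finite mistake bound. -/

import Mathlib

open Classical

variable {X : Type*}

/-- A hypothesis `h` is consistent with a sample `S`. -/
def Consistent (h : X → Bool) (S : List (X × Bool)) : Prop :=
  ∀ p ∈ S, h p.1 = p.2

/-- A sample is realizable by the class `H`. -/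
def Realizable (H : Set (X → Bool)) (S : List (X × Bool)) : Prop :=
  ∃ h ∈ H, Consistent h S

/-- The version space `H_S`. -/
def VS (H : Set (X → Bool)) (S : List (X × Bool)) : Set (X → Bool) :=
  {h ∈ H | Consistent h S}

/-- `H^{(x,r)}`. -/
def Restrict (H : Set (X → Bool)) (x : X) (r : Bool) : Set (X → Bool) :=
  {h ∈ H | h x = r}

/-- `Shatters H d` holds iff there is a complete binary tree of depth `d` shattered by `H`,
equivalently stated recursively. -/
def Shatters (H : Set (X → Bool)) : ℕ → Prop
  | 0 => H.Nonempty
  | d + 1 => ∃ x : X, Shatters (Restrict H x false) d ∧ Shatters (Restrict H x true) d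

/-- Littlestone dimension, with `Ldim ∅ = ⊥` (playing the role of `-1`). -/
noncomputable def Ldim (H : Set (X → Bool)) : WithBot ℕ∞ :=
  ⨆ d ∈ {d : ℕ | Shatters H d}, ((d : ℕ∞) : WithBot ℕ∞)

def MistakesFrom (A : List (X × Bool) → X → Bool) :
    List (X × Bool) → List (X × Bool) → ℕ
  | _, [] => 0
  | pre, p :: rest =>
      (if A pre p.1 ≠ p.2 then 1 else 0) + MistakesFrom A (pre ++ [p]) rest

/-- Number of mistakes that the online learner `A` makes on the sample `S`. -/
def Mistakes (A : List (X × Bool) → X → Bool) (S : List (X × Bool)) : ℕ :=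
  MistakesFrom A [] S

/-- Mistake bound of `A` with respect to `H`. -/
noncomputable def MB (A : List (X × Bool) → X → Bool) (H : Set (X → Bool)) : ℕ∞ :=
  ⨆ S ∈ {S | Realizable H S}, (Mistakes A S : ℕ∞)

/-- `A` is an optimal online learner for `H`. -/
def IsOptimal (A : List (X × Bool) → X → Bool) (H : Set (X → Bool)) : Prop :=
  MB A H = ⨅ B : List (X × Bool) → X → Bool, MB B H

/-- Post-`S` mistake bound of `A` w.r.t. `H`. -/
noncomputable def PostMB (A : List (X × Bool) → X → Bool) (H : Set (X → Bool))
    (S : List (X × Bool)) : ℕ∞ :=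
  ⨆ S' ∈ {S' | Realizable H (S ++ S')}, ((Mistakes A (S ++ S') - Mistakes A S : ℕ) : ℕ∞)

/-- Optimal post-`S` mistake bound. -/
noncomputable def OptPostMB (H : Set (X → Bool)) (S : List (X × Bool)) : ℕ∞ :=
  ⨅ A : List (X × Bool) → X → Bool, PostMB A H S

/-- `A` is anytime optimal for `H`. -/
def AnytimeOptimal (A : List (X × Bool) → X → Bool) (H : Set (X → Bool)) : Prop :=
  ∀ S, Realizable H S → PostMB A H S = OptPostMB H S
/-- The `e`-th partial computable function in the standard numbering by codes. -/
def phi (e : ℕ) : ℕ →. ℕ :=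
  (Denumerable.ofNat Nat.Partrec.Code e).eval

/-- `φ_e(x)↓`. -/
def phiHalts (e x : ℕ) : Prop := (phi e x).Dom

/-- The {0,1}-valued learner induced by a two-place partial computable function:
it predicts `true` exactly when the output converges to `1`. -/
noncomputable def predOf (A : ℕ → ℕ →. ℕ) : List (ℕ × Bool) → ℕ → Bool :=
  fun S x => if 1 ∈ A (Encodable.encode S) x then true else false

/-- `A` is a computable online learner for `H`: a two-place partial computable function
converging with value in {0,1} on every (encoded `H`-realizable sample, point) pair. -/
def IsCOnlineLearner (A : ℕ → ℕ →. ℕ) (H : Set (ℕ → Bool)) : Prop :=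
  Partrec₂ A ∧
    ∀ S : List (ℕ × Bool), Realizable H S → ∀ x : ℕ,
      ∃ y ∈ A (Encodable.encode S) x, y = 0 ∨ y = 1

/-!
Points are split into the point `0` and infinite blocks indexed by pairs `(e, M)`. On the block
of `(e, M)` an adversary runs the `e`-th partial computable function as a learner for `M + 1`
rounds, always revealing the label opposite to its prediction, and stops if it ever diverges.
The positive points of the resulting finite sample define a hypothesis `h_{e,M}`; together with
the indicator of `{0}` these form the class. Distinct members have disjoint supports, so a point
labelled `1` leaves a single hypothesis and no tree of depth 2 is shattered, while the point `0`
shatters a tree of depth 1.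
If the `e`-th function is a learner for the class, every prefix of the adversary's sample is
realizable by `h_{e,M}`, so the learner halts in every round and errs `M + 1` times.
-/

theorem mistakesFrom_append (A : List (X × Bool) → X → Bool) (pre S T : List (X × Bool)) :
    MistakesFrom A pre (S ++ T) = MistakesFrom A pre S + MistakesFrom A (pre ++ S) T := by
  induction S generalizing pre with
  | nil => simp [MistakesFrom]
  | cons p S ih => simp [MistakesFrom, ih, Nat.add_assoc]

theorem mistakes_append_singleton (A : List (X × Bool) → X → Bool) (S : List (X × Bool))
    (p : X × Bool) :
    Mistakes A (S ++ [p]) = Mistakes A S + if A S p.1 ≠ p.2 then 1 else 0 := by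
  simp [Mistakes, mistakesFrom_append, MistakesFrom]

theorem Consistent.mono {h : X → Bool} {S T : List (X × Bool)} (hS : Consistent h S)
    (hT : T ⊆ S) : Consistent h T :=
  fun p hp => hS p (hT hp)

theorem Shatters.of_succ : ∀ {H : Set (X → Bool)} {d : ℕ}, Shatters H (d + 1) → Shatters H d
  | _, 0, ⟨_, _, g, hg⟩ => ⟨g, hg.1⟩
  | _, _ + 1, ⟨x, hf, ht⟩ => ⟨x, hf.of_succ, ht.of_succ⟩

theorem Shatters.of_le {H : Set (X → Bool)} {d d' : ℕ} (hd : d ≤ d') (h : Shatters H d') :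
    Shatters H d := by
  induction d', hd using Nat.le_induction with
  | base => exact h
  | succ d' _ ih => exact ih h.of_succ

theorem not_shatters_two {H : Set (X → Bool)} (hH : ∀ x, (Restrict H x true).Subsingleton) :
    ¬ Shatters H 2 := by
  rintro ⟨x, -, y, ⟨g, hg, hgy⟩, ⟨g', hg', hg'y⟩⟩
  rw [hH x hg hg'] at hgy
  exact Bool.false_ne_true (hgy.symm.trans hg'y)

theorem ldim_eq_one {H : Set (X → Bool)} (h1 : Shatters H 1) (h2 : ¬ Shatters H 2) :
    Ldim H = ((1 : ℕ∞) : WithBot ℕ∞) := by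
  refine le_antisymm (iSup₂_le fun d hd => ?_) (le_iSup₂_of_le 1 h1 le_rfl)
  have : d ≤ 1 := by
    by_contra! hd2
    exact h2 (Shatters.of_le hd2 hd)
  exact_mod_cast this

section PosIndicator

variable [DecidableEq X]

def posIndicator (S : List (X × Bool)) : X → Bool := fun x => decide ((x, true) ∈ S)

theorem consistent_posIndicator {S : List (X × Bool)} (hS : (S.map Prod.fst).Nodup) :
    Consistent (posIndicator S) S := by
  rintro ⟨x, b⟩ hp
  cases b with
  | true => simpa [posIndicator] using hp
  | false =>
    simp only [posIndicator, decide_eq_false_iff_not]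
    intro ht
    simpa using List.inj_on_of_nodup_map hS hp ht rfl

theorem mem_map_fst_of_posIndicator {S : List (X × Bool)} {x : X}
    (h : posIndicator S x = true) : x ∈ S.map Prod.fst :=
  List.mem_map.mpr ⟨(x, true), by simpa [posIndicator] using h, rfl⟩

theorem computable_posIndicator [Primcodable X] (S : List (X × Bool)) :
    Computable (posIndicator S) := by
  have h := (Primrec.list_idxOf₁ S).comp (Primrec.pair Primrec.id (Primrec.const true))
  refine (Primrec.nat_lt.comp h (Primrec.const S.length)).decide.to_comp.of_eq fun x => ?_
  simp [posIndicator, List.idxOf_lt_length_iff]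

end PosIndicator

section Adversary

variable (P : List (X × Bool) → X → Bool) (halts : List (X × Bool) → X → Prop) (pt : ℕ → X)

noncomputable def adversary : ℕ → List (X × Bool)
  | 0 => []
  | i + 1 =>
    if halts (adversary i) (pt i) then adversary i ++ [(pt i, !P (adversary i) (pt i))]
    else adversary i

theorem adversary_prefix {i j : ℕ} (hij : i ≤ j) :
    adversary P halts pt i <+: adversary P halts pt j := by
  induction j, hij using Nat.le_induction with
  | base => exact List.prefix_refl _
  | succ j _ ih =>
    refine ih.trans ?_
    rw [adversary]
    split_ifs
    · exact List.prefix_append _ _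
    · exact List.prefix_refl _

theorem map_fst_adversary_sublist (i : ℕ) :
    List.Sublist ((adversary P halts pt i).map Prod.fst) ((List.range i).map pt) := by
  induction i with
  | zero => simp [adversary]
  | succ i ih =>
    rw [adversary, List.range_succ, List.map_append]
    split_ifs
    · simpa using ih.append_right [pt i]
    · exact ih.trans (List.sublist_append_left _ _)

theorem mistakes_adversary {n : ℕ} (h : ∀ i < n, halts (adversary P halts pt i) (pt i)) :
    Mistakes P (adversary P halts pt n) = n := by
  induction n with
  | zero => rfl
  | succ n ih =>
    rw [adversary, if_pos (h n n.lt_succ_self), mistakes_append_singleton,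
      ih fun i hi => h i (hi.trans n.lt_succ_self)]
    simp

end Adversary

def blockPt (e M i : ℕ) : ℕ := Nat.pair (Nat.pair e M) i + 1

def blockOf (x : ℕ) : ℕ × ℕ := (x - 1).unpair.1.unpair

theorem blockOf_blockPt (e M i : ℕ) : blockOf (blockPt e M i) = (e, M) := by
  simp [blockOf, blockPt]

theorem blockPt_ne_zero (e M i : ℕ) : blockPt e M i ≠ 0 := Nat.succ_ne_zero _

theorem blockPt_injective (e M : ℕ) : Function.Injective (blockPt e M) := fun i i' h => by
  simpa [blockPt] using h

def learnerOf (e : ℕ) : ℕ → ℕ →. ℕ := fun n x => phi e (Nat.pair n x)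

theorem exists_learnerOf_eq {A : ℕ → ℕ →. ℕ} (hA : Partrec₂ A) : ∃ e, learnerOf e = A := by
  have h : Partrec fun n : ℕ => A n.unpair.1 n.unpair.2 :=
    hA.comp (Computable.fst.comp Computable.unpair) (Computable.snd.comp Computable.unpair)
  obtain ⟨c, hc⟩ := Nat.Partrec.Code.exists_code.mp (Partrec.nat_iff.mp h)
  refine ⟨Encodable.encode c, funext₂ fun n x => ?_⟩
  simp [learnerOf, phi, hc]

noncomputable def diagSample (e M : ℕ) : ℕ → List (ℕ × Bool) :=
  adversary (predOf (learnerOf e)) (fun S x => (learnerOf e (Encodable.encode S) x).Dom)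
    (blockPt e M)

noncomputable def diagHyp (e M : ℕ) : ℕ → Bool := posIndicator (diagSample e M (M + 1))

def zeroHyp : ℕ → Bool := posIndicator [(0, true)]

noncomputable def diagClass : Set (ℕ → Bool) :=
  insert zeroHyp (Set.range fun b : ℕ × ℕ => diagHyp b.1 b.2)

theorem consistent_diagHyp {e M i : ℕ} (hi : i ≤ M + 1) :
    Consistent (diagHyp e M) (diagSample e M i) :=
  (consistent_posIndicator ((map_fst_adversary_sublist _ _ _ _).nodup
    (List.nodup_range.map (blockPt_injective e M)))).mono (adversary_prefix _ _ _ hi).subset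

theorem realizable_diagSample {e M i : ℕ} (hi : i ≤ M + 1) :
    Realizable diagClass (diagSample e M i) :=
  ⟨diagHyp e M, Or.inr ⟨(e, M), rfl⟩, consistent_diagHyp hi⟩

theorem exists_blockPt_of_diagHyp {e M x : ℕ} (h : diagHyp e M x = true) :
    ∃ i, blockPt e M i = x := by
  obtain ⟨i, -, hi⟩ :=
    List.mem_map.mp ((map_fst_adversary_sublist _ _ _ _).subset (mem_map_fst_of_posIndicator h))
  exact ⟨i, hi⟩

noncomputable def owner (x : ℕ) : ℕ → Bool :=
  if x = 0 then zeroHyp else diagHyp (blockOf x).1 (blockOf x).2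

theorem eq_owner {g : ℕ → Bool} (hg : g ∈ diagClass) {x : ℕ} (hx : g x = true) :
    g = owner x := by
  rcases hg with rfl | ⟨⟨e, M⟩, rfl⟩
  · have : x = 0 := by simpa [zeroHyp, posIndicator] using hx
    simp [owner, this]
  · obtain ⟨i, rfl⟩ := exists_blockPt_of_diagHyp hx
    simp [owner, blockPt_ne_zero, blockOf_blockPt]

theorem diagHyp_zero (e M : ℕ) : diagHyp e M 0 = false := by
  refine Bool.eq_false_iff.mpr fun h => ?_
  obtain ⟨i, hi⟩ := exists_blockPt_of_diagHyp h
  exact blockPt_ne_zero e M i hi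

theorem ldim_diagClass : Ldim diagClass = ((1 : ℕ∞) : WithBot ℕ∞) := by
  refine ldim_eq_one ⟨0, ⟨diagHyp 0 0, Or.inr ⟨(0, 0), rfl⟩, diagHyp_zero 0 0⟩,
    ⟨zeroHyp, Or.inl rfl, by simp [zeroHyp, posIndicator]⟩⟩ (not_shatters_two fun x => ?_)
  rintro g ⟨hg, hgx⟩ g' ⟨hg', hg'x⟩
  rw [eq_owner hg hgx, eq_owner hg' hg'x]

theorem mistakes_diagSample {e : ℕ} (he : IsCOnlineLearner (learnerOf e) diagClass) (M : ℕ) :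
    Mistakes (predOf (learnerOf e)) (diagSample e M (M + 1)) = M + 1 :=
  mistakes_adversary _ _ _ fun i hi => by
    obtain ⟨y, hy, -⟩ := he.2 _ (realizable_diagSample hi.le) (blockPt e M i)
    exact Part.dom_iff_mem.mpr ⟨y, hy⟩

/-- there is a countable class of computable hypotheses over ℕ with
Littlestone dimension 1 such that every computable online learner for it can be forced
to make more than `M` mistakes on some realizable sample, for every `M`. -/
theorem stmt13 :
    ∃ H : Set (ℕ → Bool),
      H.Countable ∧ (∀ h ∈ H, Computable h) ∧
      Ldim H = ((1 : ℕ∞) : WithBot ℕ∞) ∧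
      ∀ A : ℕ → ℕ →. ℕ, IsCOnlineLearner A H →
        ∀ M : ℕ, ∃ S : List (ℕ × Bool), Realizable H S ∧ M < Mistakes (predOf A) S := by
  refine ⟨diagClass, (Set.countable_range _).insert zeroHyp, ?_, ldim_diagClass, ?_⟩
  · rintro h (rfl | ⟨b, rfl⟩) <;> exact computable_posIndicator _
  · intro A hA M
    obtain ⟨e, rfl⟩ := exists_learnerOf_eq hA.1
    refine ⟨diagSample e M (M + 1), realizable_diagSample le_rfl, ?_⟩
    rw [mistakes_diagSample hA M]
    exact M.lt_succ_self
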